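/- For each integer n ≥ 0 and parameter α, the higher-order Bernoulli number B_n^{(α)} = B_n^{(α)}(0) satisfies B_n^{(α)} = Σ_{i=0}^{n} ⟨−α⟩_i · (n!/(n+i)!) · Σ_{j=0}^{i} (−1)^{i−j} C(n+i, i−j) S(n+j, j). -/

import Mathlib

open Finset

/-- Stirling numbers of the second kind `S(n,k)`. -/
def stirling : ℕ → ℕ → ℕ
  | 0, 0 => 1
  | 0, _ + 1 => 0
  | _ + 1, 0 => 0
  | n + 1, k + 1 => (k + 1) * stirling n (k + 1) + stirling n k

/-- The falling factorial `⟨x⟩_i = x (x-1) ⋯ (x-i+1)`, with `⟨x⟩_0 = 1`. -/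
def fallingFac (x : ℝ) (i : ℕ) : ℝ := ∏ k ∈ Finset.range i, (x - k)

/-- The function `(e^t - 1)/t`, extended by the value `1` at `t = 0`. -/
noncomputable def expm1Div (t : ℝ) : ℝ := if t = 0 then 1 else (Real.exp t - 1) / t

/-- The higher-order Bernoulli polynomial `B_n^{(α)}(x)`, defined via the generating
function `(t/(eᵗ-1))^α e^{xt} = ∑ B_n^{(α)}(x) tⁿ/n!`, i.e. as the `n`-th derivative
of `((eᵗ-1)/t)^{-α} e^{xt}` at `t = 0`. -/
noncomputable def higherBernoulli (n : ℕ) (α x : ℝ) : ℝ :=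
  iteratedDeriv n (fun t => expm1Div t ^ (-α) * Real.exp (x * t)) 0

/-- The higher-order Euler polynomial `E_n^{(α)}(x)`, defined via the generating
function `(2/(eᵗ+1))^α e^{xt} = ∑ E_n^{(α)}(x) tⁿ/n!`. -/
noncomputable def higherEuler (n : ℕ) (α x : ℝ) : ℝ :=
  iteratedDeriv n (fun t => ((Real.exp t + 1) / 2) ^ (-α) * Real.exp (x * t)) 0

/-!
With `E(t) = (eᵗ - 1)/t`, `B_n^{(α)}/n!` is the `n`-th Taylor coefficient of `E^{-α}`. Writing
`E = 1 + D` with `D(0) = 0`, that coefficient is the one of the binomial series `∑ᵢ (y choose i) Dⁱ`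
at `y = -α`, truncated at `i = n` since `Dⁱ = O(tⁱ)`; this follows coefficientwise from
`(E^y)' = y E^{y-1} E'`, a relation the truncated binomial series satisfies as well. Finally
`t D(t) = (eᵗ - 1) - t`, so `[tⁿ] Dⁱ = [tⁿ⁺ⁱ] ((eᵗ - 1) - t)ⁱ`, and the binomial theorem together
with `(eᵗ - 1)ʲ = j! ∑ₘ S(m, j) tᵐ/m!` produces the inner sum.
-/

open PowerSeries
open scoped Nat ContDiff

section TaylorSeries

variable {𝕜 : Type*} [NontriviallyNormedField 𝕜] {f g : 𝕜 → 𝕜}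

noncomputable def taylorSeries (f : 𝕜 → 𝕜) : 𝕜⟦X⟧ :=
  mk fun n => iteratedDeriv n f 0 / n !

@[simp]
lemma coeff_taylorSeries (f : 𝕜 → 𝕜) (n : ℕ) :
    coeff n (taylorSeries f) = iteratedDeriv n f 0 / n ! :=
  coeff_mk _ _

lemma constantCoeff_taylorSeries (f : 𝕜 → 𝕜) : constantCoeff (taylorSeries f) = f 0 := by
  simp [← coeff_zero_eq_constantCoeff_apply]

lemma taylorSeries_const (c : 𝕜) : taylorSeries (fun _ => c) = C c := by
  ext n
  cases n <;> simp [iteratedDeriv_const, coeff_C]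

lemma taylorSeries_id : taylorSeries (fun t : 𝕜 => t) = X := by
  ext n
  simp only [coeff_taylorSeries, iteratedDeriv_fun_id_zero, coeff_X]
  split_ifs with h <;> simp [h]

lemma taylorSeries_sub (hf : ContDiffAt 𝕜 ∞ f 0) (hg : ContDiffAt 𝕜 ∞ g 0) :
    taylorSeries (fun t => f t - g t) = taylorSeries f - taylorSeries g := by
  ext n
  simp only [coeff_taylorSeries, map_sub, iteratedDeriv_fun_sub (hf.of_le (mod_cast le_top))
    (hg.of_le (mod_cast le_top)), sub_div]

lemma taylorSeries_mul [CharZero 𝕜] (hf : ContDiffAt 𝕜 ∞ f 0) (hg : ContDiffAt 𝕜 ∞ g 0) :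
    taylorSeries (fun t => f t * g t) = taylorSeries f * taylorSeries g := by
  ext n
  rw [coeff_taylorSeries, iteratedDeriv_fun_mul (hf.of_le (mod_cast le_top))
    (hg.of_le (mod_cast le_top)), coeff_mul, Finset.Nat.sum_antidiagonal_eq_sum_range_succ
    (fun i j => coeff i (taylorSeries f) * coeff j (taylorSeries g)), Finset.sum_div]
  refine Finset.sum_congr rfl fun k hk => ?_
  rw [Nat.cast_choose 𝕜 (Finset.mem_range_succ_iff.1 hk), coeff_taylorSeries, coeff_taylorSeries]
  have : (n ! : 𝕜) ≠ 0 := Nat.cast_ne_zero.2 n.factorial_ne_zero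
  field_simp

lemma taylorSeries_deriv [CharZero 𝕜] (f : 𝕜 → 𝕜) :
    taylorSeries (deriv f) = d⁄dX 𝕜 (taylorSeries f) := by
  ext n
  rw [coeff_derivative, coeff_taylorSeries, coeff_taylorSeries, ← iteratedDeriv_succ',
    Nat.factorial_succ]
  push_cast
  field_simp

end TaylorSeries

section ExpSubOne

variable {K : Type*} [Field K] [CharZero K]

lemma derivative_exp_sub_one_pow (j : ℕ) :
    d⁄dX K ((exp K - 1) ^ (j + 1)) =
      ((j : K⟦X⟧) + 1) * ((exp K - 1) ^ (j + 1) + (exp K - 1) ^ j) := by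
  rw [derivative_pow, map_sub, derivative_exp, derivative_one]
  push_cast
  ring

lemma coeff_exp_sub_one_pow (m j : ℕ) :
    coeff m ((exp K - 1) ^ j) = (j ! * stirling m j : K) / m ! := by
  induction m generalizing j with
  | zero =>
    cases j <;> simp [stirling, coeff_zero_eq_constantCoeff]
  | succ m ih =>
    cases j with
    | zero => simp [stirling, coeff_one]
    | succ j =>
      have h := congrArg (coeff m) (derivative_exp_sub_one_pow (K := K) j)
      rw [coeff_derivative, show ((j : K⟦X⟧) + 1) = C ((j : K) + 1) by simp, coeff_C_mul,
        map_add, ih, ih] at h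
      rw [stirling]
      push_cast [Nat.factorial_succ] at h ⊢
      field_simp at h ⊢
      linear_combination h

lemma coeff_pow_sub_one_of_X_mul_eq_exp_sub_one {P : K⟦X⟧} (hP : X * P = exp K - 1)
    (n i : ℕ) :
    coeff n ((P - 1) ^ i) = (i ! : K) / (n + i)! *
      ∑ j ∈ Finset.range (i + 1),
        (-1 : K) ^ (i - j) * ((n + i).choose (i - j) : K) * (stirling (n + j) j : K) := by
  have hexpand : X ^ i * (P - 1) ^ i = ∑ j ∈ Finset.range (i + 1),
      C ((-1 : K) ^ (i - j) * i.choose j) * ((exp K - 1) ^ j * X ^ (i - j)) := by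
    rw [← mul_pow, mul_sub, hP, mul_one, sub_eq_add_neg, add_pow]
    refine Finset.sum_congr rfl fun j _ => ?_
    rw [neg_pow, map_mul, map_pow, map_neg, map_one, map_natCast]
    ring
  rw [← coeff_X_pow_mul _ i n, hexpand, map_sum, Finset.mul_sum]
  refine Finset.sum_congr rfl fun j hj => ?_
  have hji : j ≤ i := Finset.mem_range_succ_iff.1 hj
  rw [coeff_C_mul, show n + i = n + j + (i - j) by omega, coeff_mul_X_pow, coeff_exp_sub_one_pow,
    Nat.cast_choose K hji, Nat.cast_choose K (show i - j ≤ n + j + (i - j) by omega),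
    show n + j + (i - j) - (i - j) = n + j by omega]
  have hjfac : (j ! : K) ≠ 0 := Nat.cast_ne_zero.2 j.factorial_ne_zero
  have hnifac : ((n + j + (i - j))! : K) ≠ 0 := Nat.cast_ne_zero.2 (Nat.factorial_ne_zero _)
  field_simp

end ExpSubOne

lemma fallingFac_succ (y : ℝ) (i : ℕ) : fallingFac y (i + 1) = y * fallingFac (y - 1) i := by
  rw [fallingFac, fallingFac, Finset.prod_range_succ', Nat.cast_zero, sub_zero, mul_comm]
  congr 1
  refine Finset.prod_congr rfl fun k _ => ?_
  push_cast
  ring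

noncomputable def truncBinomialSeries (y : ℝ) (Q : ℝ⟦X⟧) (N : ℕ) : ℝ⟦X⟧ :=
  ∑ i ∈ Finset.range N, (fallingFac y i / i !) • Q ^ i

lemma constantCoeff_truncBinomialSeries (y : ℝ) {Q : ℝ⟦X⟧} (hQ : constantCoeff Q = 0) (N : ℕ) :
    constantCoeff (truncBinomialSeries y Q (N + 1)) = 1 := by
  simp [truncBinomialSeries, Finset.sum_range_succ', hQ, fallingFac]

lemma derivative_truncBinomialSeries (y : ℝ) (Q : ℝ⟦X⟧) (N : ℕ) :
    d⁄dX ℝ (truncBinomialSeries y Q (N + 1)) =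
      C y * truncBinomialSeries (y - 1) Q N * d⁄dX ℝ Q := by
  rw [truncBinomialSeries, Finset.sum_range_succ', pow_zero, map_add, Derivation.map_smul,
    Derivation.map_one_eq_zero, smul_zero, add_zero, map_sum, truncBinomialSeries,
    Finset.mul_sum, Finset.sum_mul]
  refine Finset.sum_congr rfl fun i _ => ?_
  have hcoeff : fallingFac y (i + 1) / (i + 1)! * (i + 1) = y * (fallingFac (y - 1) i / i !) := by
    rw [fallingFac_succ, Nat.factorial_succ]
    push_cast
    field_simp
  rw [Derivation.map_smul, derivative_pow, smul_eq_C_mul, smul_eq_C_mul, Nat.add_sub_cancel,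
    show ((i + 1 : ℕ) : ℝ⟦X⟧) = C ((i : ℝ) + 1) by simp]
  calc C (fallingFac y (i + 1) / (i + 1)!) * (C ((i : ℝ) + 1) * Q ^ i * d⁄dX ℝ Q)
      = C (fallingFac y (i + 1) / (i + 1)! * (i + 1)) * (Q ^ i * d⁄dX ℝ Q) := by
        rw [map_mul]; ring
    _ = C y * (C (fallingFac (y - 1) i / i !) * Q ^ i) * d⁄dX ℝ Q := by
        rw [hcoeff, map_mul]; ring

lemma derivative_taylorSeries_rpow {f : ℝ → ℝ} (hf : ContDiff ℝ ∞ f) (hpos : ∀ t, 0 < f t)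
    (y : ℝ) :
    d⁄dX ℝ (taylorSeries fun t => f t ^ y) =
      C y * taylorSeries (fun t => f t ^ (y - 1)) * d⁄dX ℝ (taylorSeries f) := by
  have hderiv : deriv (fun t => f t ^ y) = fun t => y * f t ^ (y - 1) * deriv f t := by
    funext t
    rw [deriv_rpow_const (hf.differentiable (by simp) t) (Or.inl (hpos t).ne')]
    ring
  have hsmooth (z : ℝ) : ContDiff ℝ ∞ fun t => f t ^ z :=
    hf.rpow_const_of_ne fun t => (hpos t).ne'
  rw [← taylorSeries_deriv, hderiv, ← taylorSeries_deriv,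
    taylorSeries_mul (contDiffAt_const.mul (hsmooth _).contDiffAt)
      (contDiff_infty_iff_deriv.1 hf).2.contDiffAt,
    taylorSeries_mul contDiffAt_const (hsmooth _).contDiffAt, taylorSeries_const]

theorem coeff_taylorSeries_rpow {f : ℝ → ℝ} (hf : ContDiff ℝ ∞ f) (hpos : ∀ t, 0 < f t)
    (h0 : f 0 = 1) {n N : ℕ} (hn : n < N) (y : ℝ) :
    coeff n (taylorSeries fun t => f t ^ y) =
      coeff n (truncBinomialSeries y (taylorSeries f - 1) N) := by
  have hQ : constantCoeff (taylorSeries f - 1) = 0 := by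
    simp [constantCoeff_taylorSeries, h0]
  induction n using Nat.strong_induction_on generalizing y N with
  | _ n ih =>
    obtain ⟨N, rfl⟩ : ∃ M, N = M + 1 := ⟨N - 1, by omega⟩
    cases n with
    | zero =>
      simp [coeff_zero_eq_constantCoeff, h0, constantCoeff_truncBinomialSeries y hQ]
    | succ m =>
      have htrunc : trunc (m + 1) (taylorSeries fun t => f t ^ (y - 1)) =
          trunc (m + 1) (truncBinomialSeries (y - 1) (taylorSeries f - 1) N) := by
        ext k
        simp only [coeff_trunc]
        split_ifs with hk
        exacts [ih k (by omega) (by omega) (y - 1), rfl]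
      have hQ' : d⁄dX ℝ (taylorSeries f - 1) = d⁄dX ℝ (taylorSeries f) := by
        rw [map_sub, derivative_one, sub_zero]
      refine mul_right_cancel₀ (b := (m : ℝ) + 1) (by positivity) ?_
      calc coeff (m + 1) (taylorSeries fun t => f t ^ y) * (m + 1)
          = y * coeff m ((taylorSeries fun t => f t ^ (y - 1)) * d⁄dX ℝ (taylorSeries f)) := by
            rw [← coeff_derivative, derivative_taylorSeries_rpow hf hpos, mul_assoc, coeff_C_mul]
        _ = y * coeff m (truncBinomialSeries (y - 1) (taylorSeries f - 1) N *
              d⁄dX ℝ (taylorSeries f)) := by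
            rw [coeff_mul_eq_coeff_trunc_mul_trunc _ _ m.lt_succ_self, htrunc,
              ← coeff_mul_eq_coeff_trunc_mul_trunc _ _ m.lt_succ_self]
        _ = _ := by
            rw [← coeff_derivative, derivative_truncBinomialSeries, hQ', mul_assoc, coeff_C_mul]

lemma expm1Div_eq_dslope : expm1Div = dslope Real.exp 0 := by
  funext t
  rcases eq_or_ne t 0 with rfl | ht
  · simp [expm1Div, dslope_same]
  · simp [expm1Div, ht, dslope_of_ne _ ht, slope_def_field]

lemma analyticAt_expm1Div (t : ℝ) : AnalyticAt ℝ expm1Div t := by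
  rw [expm1Div_eq_dslope]
  rcases eq_or_ne t 0 with rfl | ht
  · obtain ⟨p, hp⟩ := analyticAt_rexp (x := 0)
    exact ⟨_, hp.has_fpower_series_dslope_fslope⟩
  · have h : AnalyticAt ℝ (fun s => (Real.exp s - 1) / s) t := by fun_prop (disch := exact ht)
    refine h.congr ?_
    filter_upwards [dslope_eventuallyEq_slope_of_ne Real.exp ht] with s hs
    rw [hs, slope_def_field]
    simp

lemma contDiff_expm1Div : ContDiff ℝ ∞ expm1Div :=
  contDiff_iff_contDiffAt.2 fun t => (analyticAt_expm1Div t).contDiffAt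

lemma expm1Div_pos (t : ℝ) : 0 < expm1Div t := by
  rcases lt_trichotomy t 0 with ht | rfl | ht
  · rw [expm1Div, if_neg ht.ne]
    exact div_pos_of_neg_of_neg (by simpa using Real.exp_lt_one_iff.mpr ht) ht
  · simp [expm1Div]
  · rw [expm1Div, if_neg ht.ne']
    exact div_pos (by simpa using Real.one_lt_exp_iff.mpr ht) ht

lemma mul_expm1Div (t : ℝ) : t * expm1Div t = Real.exp t - 1 := by
  rcases eq_or_ne t 0 with rfl | ht
  · simp
  · rw [expm1Div, if_neg ht]
    field_simp

lemma taylorSeries_exp : taylorSeries Real.exp = exp ℝ := by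
  ext n
  simp [iteratedDeriv_eq_iterate, Real.iter_deriv_exp]

lemma X_mul_taylorSeries_expm1Div : X * taylorSeries expm1Div = exp ℝ - 1 := by
  rw [← taylorSeries_id, ← taylorSeries_mul contDiffAt_fun_id contDiff_expm1Div.contDiffAt]
  simp_rw [mul_expm1Div]
  rw [taylorSeries_sub Real.contDiff_exp.contDiffAt contDiffAt_const, taylorSeries_exp,
    taylorSeries_const, map_one]

theorem higherBernoulliNumber_closed_form (n : ℕ) (α : ℝ) :
    higherBernoulli n α 0 =
      ∑ i ∈ Finset.range (n + 1), fallingFac (-α) i *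
        ((n.factorial : ℝ) / ((n + i).factorial : ℝ)) *
        ∑ j ∈ Finset.range (i + 1),
          (-1 : ℝ) ^ (i - j) * ((n + i).choose (i - j) : ℝ) * (stirling (n + j) j : ℝ) := by
  have hB : higherBernoulli n α 0 = n ! * coeff n (taylorSeries fun t => expm1Div t ^ (-α)) := by
    simp only [higherBernoulli, zero_mul, Real.exp_zero, mul_one, coeff_taylorSeries]
    field_simp
  rw [hB, coeff_taylorSeries_rpow contDiff_expm1Div expm1Div_pos (by simp [expm1Div])
    n.lt_succ_self, truncBinomialSeries, map_sum, Finset.mul_sum]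
  refine Finset.sum_congr rfl fun i _ => ?_
  rw [coeff_smul, smul_eq_mul,
    coeff_pow_sub_one_of_X_mul_eq_exp_sub_one X_mul_taylorSeries_expm1Div]
  field_simp
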